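/- The 6×6 symmetric matrix Cᵗ representing a trigonal elasticity tensor has characteristic polynomial with roots λ₁, λ₂ (each simple) and λ₃, λ₄ (each double), where λ₁,₂ = ½[C₁₁+C₁₂+C₃₃ ± √((C₁₁+C₁₂−C₃₃)² + 8C₁₃²)] and λ₃,₄ = ½[C₁₁−C₁₂+2C₄₄ ± √((C₁₁−C₁₂−2C₄₄)² + 16C₁₄²)]. -/

import Mathlib

/-!
Up to a permutation of coordinates, `Cᵗ` is block diagonal with a `4 × 4` block and the
`2 × 2` block `[[2C₄₄, 2C₁₄], [2C₁₄, C₁₁ − C₁₂]]`. The `4 × 4` block splits further along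
`(e₁ ± e₂)/√2`: on `(e₁ + e₂)/√2, e₃` it acts as `[[C₁₁ + C₁₂, √2 C₁₃], [√2 C₁₃, C₃₃]]`, and on
`(e₁ − e₂)/√2, e₄` with the same characteristic polynomial as the `2 × 2` block. Hence the
characteristic polynomial is `q₁ q₂²` for two real quadratics, whose roots are `λ₁, λ₂` and
`λ₃, λ₄`; they are distinct because the discriminants `(C₁₁ + C₁₂ − C₃₃)² + 8C₁₃²` and
`(C₁₁ − C₁₂ − 2C₄₄)² + 16C₁₄²` are positive.
-/

open Matrix Polynomial

section Quadratic

variable {K : Type*} [Field K] [NeZero (2 : K)]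

theorem X_sq_sub_C_mul_X_add_C_eq_mul {s p r : K} (hr : r ^ 2 = s ^ 2 - 4 * p) :
    (X ^ 2 - C s * X + C p : K[X]) = (X - C ((s + r) / 2)) * (X - C ((s - r) / 2)) := by
  have hsum : C ((s + r) / 2) + C ((s - r) / 2) = C s := by
    rw [← C_add]; congr 1; field_simp; ring
  have hprod : C ((s + r) / 2) * C ((s - r) / 2) = C p := by
    rw [← C_mul]; congr 1; field_simp; linear_combination -hr
  linear_combination X * hsum - hprod

theorem add_div_two_ne_sub_div_two (s : K) {r : K} (hr : r ≠ 0) :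
    (s + r) / 2 ≠ (s - r) / 2 := by
  intro h
  field_simp at h
  have h2r : 2 * r = 0 := by linear_combination h
  exact hr ((mul_eq_zero.1 h2r).resolve_left two_ne_zero)

end Quadratic

noncomputable def trigonalBlock₄ (C11 C12 C13 C14 C33 C44 : ℝ) : Matrix (Fin 4) (Fin 4) ℝ :=
  !![C11, C12, C13, Real.sqrt 2 * C14;
     C12, C11, C13, -(Real.sqrt 2 * C14);
     C13, C13, C33, 0;
     Real.sqrt 2 * C14, -(Real.sqrt 2 * C14), 0, 2 * C44]

def trigonalBlock₂ (C11 C12 C14 C44 : ℝ) : Matrix (Fin 2) (Fin 2) ℝ :=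
  !![2 * C44, 2 * C14; 2 * C14, C11 - C12]

theorem trigonal_eq_reindex_fromBlocks (C11 C12 C13 C14 C33 C44 : ℝ) :
    !![C11, C12, C13, Real.sqrt 2 * C14, 0, 0;
       C12, C11, C13, -(Real.sqrt 2 * C14), 0, 0;
       C13, C13, C33, 0, 0, 0;
       Real.sqrt 2 * C14, -(Real.sqrt 2 * C14), 0, 2 * C44, 0, 0;
       0, 0, 0, 0, 2 * C44, 2 * C14;
       0, 0, 0, 0, 2 * C14, C11 - C12] =
      reindex finSumFinEquiv finSumFinEquiv
        (fromBlocks (trigonalBlock₄ C11 C12 C13 C14 C33 C44) 0 0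
          (trigonalBlock₂ C11 C12 C14 C44)) := by
  ext i j
  fin_cases i <;> fin_cases j <;> rfl

theorem charpoly_trigonalBlock₄ (C11 C12 C13 C14 C33 C44 : ℝ) :
    (trigonalBlock₄ C11 C12 C13 C14 C33 C44).charpoly =
      (X ^ 2 - C (C11 + C12 + C33) * X + C ((C11 + C12) * C33 - 2 * C13 ^ 2)) *
      (X ^ 2 - C (C11 - C12 + 2 * C44) * X + C (2 * (C11 - C12) * C44 - 4 * C14 ^ 2)) := by
  have hsqrt : Real.sqrt 2 ^ 2 = 2 := Real.sq_sqrt zero_le_two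
  refine Polynomial.funext fun x ↦ ?_
  rw [eval_charpoly, det_succ_row_zero]
  simp only [Nat.succ_eq_add_one, Nat.reduceAdd, scalar_apply, trigonalBlock₄, Fin.isValue,
    Matrix.sub_apply, of_apply, cons_val', cons_val_fin_one, cons_val_zero, det_fin_three,
    submatrix_apply, Fin.succ_zero_eq_one, Fin.succAbove, Fin.castSucc_zero, cons_val_one,
    Fin.succ_one_eq_two, Fin.castSucc_one, cons_val, Fin.reduceSucc, Fin.reduceCastSucc,
    Fin.sum_univ_succ, Fin.coe_ofNat_eq_mod, Nat.zero_mod, pow_zero, diagonal_apply_eq, one_mul,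
    lt_self_iff_false, ↓reduceIte, not_lt_zero, ne_eq, Fin.reduceEq, not_false_eq_true,
    diagonal_apply_ne, sub_self, mul_zero, sub_zero, zero_sub, mul_neg, neg_mul, neg_neg,
    sub_neg_eq_add, zero_add, zero_mul, add_zero, Fin.val_succ, cons_val_succ, Fin.succ_pos,
    one_ne_zero, pow_one, zero_ne_one, Fin.lt_one_iff, neg_zero, even_two, Even.neg_pow, one_pow,
    Fin.reduceLT, Finset.univ_unique, Fin.default_eq_zero, Fin.val_eq_zero, Finset.sum_singleton,
    map_add, map_sub, map_mul, map_pow, eval_mul, eval_add, eval_sub, eval_pow, eval_X, eval_C]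
  ring_nf
  rw [hsqrt]
  ring

theorem charpoly_trigonalBlock₂ (C11 C12 C14 C44 : ℝ) :
    (trigonalBlock₂ C11 C12 C14 C44).charpoly =
      X ^ 2 - C (C11 - C12 + 2 * C44) * X + C (2 * (C11 - C12) * C44 - 4 * C14 ^ 2) := by
  have htrace : (trigonalBlock₂ C11 C12 C14 C44).trace = C11 - C12 + 2 * C44 := by
    rw [trigonalBlock₂, trace_fin_two_of]; ring
  have hdet : (trigonalBlock₂ C11 C12 C14 C44).det = 2 * (C11 - C12) * C44 - 4 * C14 ^ 2 := by
    rw [trigonalBlock₂, det_fin_two_of]; ring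
  rw [charpoly_fin_two, htrace, hdet]

/-- The characteristic polynomial of the trigonal elasticity matrix `Cᵗ`
    factors as `(X - λ₁)(X - λ₂)(X - λ₃)²(X - λ₄)²`, with `λ₁ ≠ λ₂` and
    `λ₃ ≠ λ₄` when `C₁₃ ≠ 0` and `C₁₄ ≠ 0`. -/
theorem stmt_4 (C11 C12 C13 C14 C33 C44 : ℝ) (h13 : C13 ≠ 0) (h14 : C14 ≠ 0)
    (Ct : Matrix (Fin 6) (Fin 6) ℝ)
    (hCt : Ct = !![C11, C12, C13, Real.sqrt 2 * C14, 0, 0;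
                   C12, C11, C13, -(Real.sqrt 2 * C14), 0, 0;
                   C13, C13, C33, 0, 0, 0;
                   Real.sqrt 2 * C14, -(Real.sqrt 2 * C14), 0, 2 * C44, 0, 0;
                   0, 0, 0, 0, 2 * C44, 2 * C14;
                   0, 0, 0, 0, 2 * C14, C11 - C12])
    (lam1 lam2 lam3 lam4 : ℝ)
    (h1 : lam1 = (C11 + C12 + C33 + Real.sqrt ((C11 + C12 - C33)^2 + 8 * C13^2)) / 2)
    (h2 : lam2 = (C11 + C12 + C33 - Real.sqrt ((C11 + C12 - C33)^2 + 8 * C13^2)) / 2)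
    (h3 : lam3 = (C11 - C12 + 2 * C44 + Real.sqrt ((C11 - C12 - 2 * C44)^2 + 16 * C14^2)) / 2)
    (h4 : lam4 = (C11 - C12 + 2 * C44 - Real.sqrt ((C11 - C12 - 2 * C44)^2 + 16 * C14^2)) / 2) :
    Ct.charpoly = (X - C lam1) * (X - C lam2) * (X - C lam3) ^ 2 * (X - C lam4) ^ 2
      ∧ lam1 ≠ lam2 ∧ lam3 ≠ lam4 := by
  have hd₁ : 0 < (C11 + C12 - C33) ^ 2 + 8 * C13 ^ 2 := by positivity
  have hd₂ : 0 < (C11 - C12 - 2 * C44) ^ 2 + 16 * C14 ^ 2 := by positivity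
  subst h1 h2 h3 h4
  refine ⟨?_, add_div_two_ne_sub_div_two _ (Real.sqrt_pos.2 hd₁).ne',
    add_div_two_ne_sub_div_two _ (Real.sqrt_pos.2 hd₂).ne'⟩
  rw [hCt, trigonal_eq_reindex_fromBlocks, charpoly_reindex, charpoly_fromBlocks_zero₁₂,
    charpoly_trigonalBlock₄, charpoly_trigonalBlock₂,
    X_sq_sub_C_mul_X_add_C_eq_mul (r := Real.sqrt ((C11 + C12 - C33) ^ 2 + 8 * C13 ^ 2))
      (by rw [Real.sq_sqrt hd₁.le]; ring),
    X_sq_sub_C_mul_X_add_C_eq_mul (r := Real.sqrt ((C11 - C12 - 2 * C44) ^ 2 + 16 * C14 ^ 2))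
      (by rw [Real.sq_sqrt hd₂.le]; ring)]
  ring
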